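/- Let $r>0$, $p>1$, and let $u\in L^p_{loc}(\mathbb{R}^d;\mathbb{R}^m)$ be such that $u\equiv z$ on $\mathbb{R}^d\setminus B_{R-r\varepsilon}$ for some $z\in\mathbb{R}^m$, $R>r\varepsilon$. Then there exists $C=C(r,p,d)$ such that for every $\xi\in\mathbb{R}^d$ and $\varepsilon>0$: $\int_{\mathbb{R}^d}\left|\frac{u(x+\varepsilon\xi)-u(x)}{\varepsilon}\right|^p dx\le C(|\xi|^p+1)\,G^{r,p}_\varepsilon(u,\mathbb{R}^d)$, where $G^{r,p}_\varepsilon(u,\mathbb{R}^d)=\int_{B_r}\int_{\mathbb{R}^d}\left|\frac{u(x+\varepsilon\eta)-u(x)}{\varepsilon}\right|^p dx\,d\eta$. -/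

import Mathlib

/-!
For fixed `ε` the map `q η = ‖u(· + εη) - u‖_{L^p} / ε` is subadditive, by Minkowski's inequality
and translation invariance of Lebesgue measure. Writing `ξ = (n + 1) ξ₀` with `n + 1 ≤ 2|ξ|/r + 1`
gives `|ξ₀| < r/2` and `q ξ ≤ (n + 1) q ξ₀`. A short step is then controlled by averaging
`q ξ₀ ≤ q (ξ₀ - η) + q η` over `η ∈ B_{r/2}`: both `ξ₀ - η` and `η` lie in `B_r`, so
`|B_{r/2}| q(ξ₀)^p ≤ 2^p ∫_{B_r} q^p = 2^p G^{r,p}_ε(u)`.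
-/

open MeasureTheory Metric ENNReal Set

/-- The nonlocal energy `G^{r,p}_ε(u, ℝ^d)`. -/
noncomputable def Gen {d m : ℕ} (r p ε : ℝ)
    (u : EuclideanSpace ℝ (Fin d) → EuclideanSpace ℝ (Fin m)) : ℝ≥0∞ :=
  ∫⁻ η in ball (0 : EuclideanSpace ℝ (Fin d)) r,
    ∫⁻ x, (‖(ε⁻¹ : ℝ) • (u (x + ε • η) - u x)‖₊ : ℝ≥0∞) ^ p

section Increment

variable {G F : Type*} [AddCommGroup G] [MeasurableSpace G] [NormedAddCommGroup F]
  {μ : Measure G} {p : ℝ} {u : G → F}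

noncomputable def incrementLpNorm (μ : Measure G) (p : ℝ) (u : G → F) (h : G) : ℝ≥0∞ :=
  eLpNorm' (fun x ↦ u (x + h) - u x) p μ

lemma incrementLpNorm_rpow (hp : 0 < p) (h : G) :
    incrementLpNorm μ p u h ^ p = ∫⁻ x, ‖u (x + h) - u x‖ₑ ^ p ∂μ :=
  (lintegral_rpow_enorm_eq_rpow_eLpNorm' hp).symm

lemma incrementLpNorm_add_le [MeasurableAdd G] [μ.IsAddRightInvariant]
    (hu : AEStronglyMeasurable u μ) (hp : 1 ≤ p) (a b : G) :
    incrementLpNorm μ p u (a + b) ≤ incrementLpNorm μ p u a + incrementLpNorm μ p u b := by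
  have hshift {f : G → F} (hf : AEStronglyMeasurable f μ) (c : G) :
      AEStronglyMeasurable (fun x ↦ f (x + c)) μ :=
    hf.comp_quasiMeasurePreserving (measurePreserving_add_right μ c).quasiMeasurePreserving
  have hsplit : (fun x ↦ u (x + (a + b)) - u x) =
      (fun x ↦ u (x + b + a) - u (x + b)) + fun x ↦ u (x + b) - u x := by
    ext x; simp [add_assoc, add_comm a b]
  calc incrementLpNorm μ p u (a + b)
      ≤ eLpNorm' (fun x ↦ u (x + b + a) - u (x + b)) p μ + incrementLpNorm μ p u b := by
        rw [incrementLpNorm, hsplit]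
        exact eLpNorm'_add_le (hshift ((hshift hu a).sub hu) b) ((hshift hu b).sub hu) hp
    _ = incrementLpNorm μ p u a + incrementLpNorm μ p u b := by
        simp only [incrementLpNorm, eLpNorm',
          lintegral_add_right_eq_self (fun x ↦ ‖u (x + a) - u x‖ₑ ^ p) b]

lemma aemeasurable_incrementLpNorm [MeasurableAdd₂ G] [SFinite μ] [μ.IsAddLeftInvariant]
    (hu : AEStronglyMeasurable u μ) : AEMeasurable (incrementLpNorm μ p u) μ := by
  have hjoint : AEMeasurable (fun z : G × G ↦ ‖u (z.2 + z.1) - u z.2‖ₑ ^ p) (μ.prod μ) :=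
    ((hu.comp_quasiMeasurePreserving (quasiMeasurePreserving_add_swap μ μ)).sub
      (hu.comp_quasiMeasurePreserving Measure.quasiMeasurePreserving_snd)).enorm.pow_const p
  exact hjoint.lintegral_prod_right'.pow_const _

end Increment

lemma apply_nsmul_succ_le_of_subadditive {M : Type*} [AddMonoid M] {q : M → ℝ≥0∞}
    (hq : ∀ a b, q (a + b) ≤ q a + q b) (n : ℕ) (a : M) :
    q ((n + 1) • a) ≤ (n + 1) * q a := by
  induction n with
  | zero => simp
  | succ n ih =>
    calc q ((n + 1 + 1) • a) ≤ q ((n + 1) • a) + q a := by rw [succ_nsmul]; exact hq _ _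
      _ ≤ (n + 1) * q a + q a := by gcongr
      _ = ((n + 1 : ℕ) + 1 : ℝ≥0∞) * q a := by push_cast; ring

lemma natFloor_mul_add_one_rpow_le {c s p : ℝ} (hc : 0 ≤ c) (hs : 0 ≤ s) (hp : 1 ≤ p) :
    ((⌊c * s⌋₊ : ℝ) + 1) ^ p ≤ 2 ^ (p - 1) * max 1 (c ^ p) * (s ^ p + 1) := by
  have hconvex : (c * s + 1) ^ p ≤ 2 ^ (p - 1) * ((c * s) ^ p + 1) := by
    lift c * s to NNReal using mul_nonneg hc hs with t
    have := NNReal.rpow_add_le_mul_rpow_add_rpow t 1 hp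
    rw [NNReal.one_rpow] at this
    exact_mod_cast this
  calc ((⌊c * s⌋₊ : ℝ) + 1) ^ p ≤ (c * s + 1) ^ p := by
        gcongr
        exact Nat.floor_le (mul_nonneg hc hs)
    _ ≤ 2 ^ (p - 1) * (c ^ p * s ^ p + 1) := by rwa [← Real.mul_rpow hc hs]
    _ ≤ 2 ^ (p - 1) * max 1 (c ^ p) * (s ^ p + 1) := by
        rw [mul_assoc]
        gcongr
        have := Real.rpow_nonneg hs p
        nlinarith [le_max_left 1 (c ^ p), le_max_right 1 (c ^ p)]

section Subadditive

variable {E : Type*} [NormedAddCommGroup E] [MeasurableSpace E] [BorelSpace E]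
  {μ : Measure E} {q : E → ℝ≥0∞} {p r : ℝ}

lemma measure_ball_mul_rpow_le_setLIntegral_ball [μ.IsAddLeftInvariant] [μ.IsNegInvariant]
    (hq : ∀ a b, q (a + b) ≤ q a + q b) (hqm : AEMeasurable q μ) (hp : 1 ≤ p) {ξ : E}
    (hξ : ‖ξ‖ < r) :
    μ (ball 0 r) * q ξ ^ p ≤ 2 ^ p * ∫⁻ η in ball 0 (2 * r), q η ^ p ∂μ := by
  set I := ∫⁻ η in ball 0 (2 * r), q η ^ p ∂μ
  have hsplit (η : E) : q ξ ^ p ≤ 2 ^ (p - 1) * (q (ξ - η) ^ p + q η ^ p) := by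
    refine (rpow_le_rpow ?_ (by linarith)).trans (rpow_add_le_mul_rpow_add_rpow _ _ hp)
    simpa using hq (ξ - η) η
  have hfar : ∫⁻ η in ball 0 r, q (ξ - η) ^ p ∂μ ≤ I := by
    calc ∫⁻ η in ball 0 r, q (ξ - η) ^ p ∂μ
        ≤ ∫⁻ η in (ξ - ·) ⁻¹' ball 0 (2 * r), q (ξ - η) ^ p ∂μ := by
          refine lintegral_mono_set fun η hη ↦ ?_
          simp only [mem_preimage, mem_ball, dist_zero_right] at hη ⊢
          linarith [norm_sub_le ξ η]
      _ = I := (Measure.measurePreserving_sub_left μ ξ).setLIntegral_comp_preimage_emb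
          (MeasurableEquiv.subLeft ξ).measurableEmbedding (q · ^ p) _
  have hnear : ∫⁻ η in ball 0 r, q η ^ p ∂μ ≤ I :=
    lintegral_mono_set (ball_subset_ball (by linarith [norm_nonneg ξ]))
  calc μ (ball 0 r) * q ξ ^ p = ∫⁻ _ in ball 0 r, q ξ ^ p ∂μ := by
        rw [setLIntegral_const, mul_comm]
    _ ≤ ∫⁻ η in ball 0 r, 2 ^ (p - 1) * (q (ξ - η) ^ p + q η ^ p) ∂μ := lintegral_mono hsplit
    _ = 2 ^ (p - 1) * (∫⁻ η in ball 0 r, q (ξ - η) ^ p ∂μ + ∫⁻ η in ball 0 r, q η ^ p ∂μ) := by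
        rw [lintegral_const_mul' _ _ (by finiteness),
          lintegral_add_right' _ (hqm.restrict.pow_const p)]
    _ ≤ 2 ^ (p - 1) * (I + I) := by gcongr
    _ = 2 ^ p * I := by
        conv_rhs => rw [← sub_add_cancel p 1, rpow_add _ _ two_ne_zero ofNat_ne_top, rpow_one]
        rw [mul_assoc, two_mul]

lemma measure_half_ball_mul_rpow_le_of_subadditive [NormedSpace ℝ E] [μ.IsAddLeftInvariant]
    [μ.IsNegInvariant] (hq : ∀ a b, q (a + b) ≤ q a + q b) (hqm : AEMeasurable q μ)
    (hp : 1 ≤ p) (hr : 0 < r) (ξ : E) :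
    μ (ball 0 (r / 2)) * q ξ ^ p ≤
      ((⌊2 / r * ‖ξ‖⌋₊ : ℝ≥0∞) + 1) ^ p * 2 ^ p * ∫⁻ η in ball 0 r, q η ^ p ∂μ := by
  set n := ⌊2 / r * ‖ξ‖⌋₊
  have hn : (0 : ℝ) < n + 1 := by positivity
  set ξ₀ := ((n : ℝ) + 1)⁻¹ • ξ
  have hξ : (n + 1) • ξ₀ = ξ := by
    rw [← Nat.cast_smul_eq_nsmul ℝ, smul_smul]; push_cast; rw [mul_inv_cancel₀ hn.ne', one_smul]
  have hξ₀ : ‖ξ₀‖ < r / 2 := by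
    rw [norm_smul, norm_inv, Real.norm_of_nonneg hn.le, inv_mul_lt_iff₀ hn]
    calc ‖ξ‖ = 2 / r * ‖ξ‖ * (r / 2) := by field_simp
      _ < (n + 1) * (r / 2) := by gcongr; exact Nat.lt_floor_add_one _
  calc μ (ball 0 (r / 2)) * q ξ ^ p ≤ μ (ball 0 (r / 2)) * ((n + 1) * q ξ₀) ^ p := by
        rw [← hξ]; gcongr; exact apply_nsmul_succ_le_of_subadditive hq n ξ₀
    _ = (n + 1) ^ p * (μ (ball 0 (r / 2)) * q ξ₀ ^ p) := by
        rw [mul_rpow_of_nonneg _ _ (by linarith)]; ring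
    _ ≤ (n + 1) ^ p * (2 ^ p * ∫⁻ η in ball 0 (2 * (r / 2)), q η ^ p ∂μ) :=
        mul_le_mul_right (measure_ball_mul_rpow_le_setLIntegral_ball hq hqm hp hξ₀) _
    _ = _ := by rw [mul_div_cancel₀ r two_ne_zero, mul_assoc]

end Subadditive

theorem exists_rpow_le_mul_setLIntegral_ball_of_subadditive {E : Type*} [NormedAddCommGroup E]
    [NormedSpace ℝ E] [MeasurableSpace E] [BorelSpace E] [FiniteDimensional ℝ E]
    (μ : Measure E) [μ.IsAddHaarMeasure] {p r : ℝ} (hp : 1 ≤ p) (hr : 0 < r) :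
    ∃ C : ℝ, 0 < C ∧ ∀ q : E → ℝ≥0∞, (∀ a b, q (a + b) ≤ q a + q b) → AEMeasurable q μ →
      ∀ ξ : E, q ξ ^ p ≤ ENNReal.ofReal (C * (‖ξ‖ ^ p + 1)) * ∫⁻ η in ball 0 r, q η ^ p ∂μ := by
  set V := μ (ball (0 : E) (r / 2))
  have hV0 : V ≠ 0 := (measure_ball_pos μ 0 (by positivity)).ne'
  have hVtop : V ≠ ⊤ := measure_ball_lt_top.ne
  have hVpos : 0 < V.toReal := toReal_pos hV0 hVtop
  set K := 2 ^ (p - 1) * max 1 ((2 / r) ^ p) * 2 ^ p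
  refine ⟨K / V.toReal, by positivity, fun q hq hqm ξ ↦ ?_⟩
  have hconst : ((⌊2 / r * ‖ξ‖⌋₊ : ℝ≥0∞) + 1) ^ p * 2 ^ p ≤
      V * ENNReal.ofReal (K / V.toReal * (‖ξ‖ ^ p + 1)) := by
    nth_rw 1 [← ofReal_toReal hVtop]
    rw [← ofReal_mul toReal_nonneg, ← mul_assoc, mul_div_cancel₀ _ hVpos.ne', ← ofReal_natCast,
      ← ofReal_one, ← ofReal_add (by positivity) zero_le_one,
      ofReal_rpow_of_nonneg (by positivity) (by linarith), ← ofReal_ofNat 2,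
      ofReal_rpow_of_nonneg zero_le_two (by linarith), ← ofReal_mul (by positivity)]
    refine ofReal_le_ofReal ?_
    have := natFloor_mul_add_one_rpow_le (by positivity : 0 ≤ 2 / r) (norm_nonneg ξ) hp
    calc _ ≤ 2 ^ (p - 1) * max 1 ((2 / r) ^ p) * (‖ξ‖ ^ p + 1) * 2 ^ p := by gcongr
      _ = _ := by ring
  rw [← ENNReal.mul_le_mul_iff_right hV0 hVtop, ← mul_assoc]
  exact (measure_half_ball_mul_rpow_le_of_subadditive hq hqm hp hr ξ).trans
    (mul_le_mul_left hconst _)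

/-- Long-range finite differences of functions constant outside a ball are controlled by
the short-range energy `G^{r,p}_ε(u, ℝ^d)`. -/
theorem long_range_controlled_by_short_range (d m : ℕ) (r p : ℝ) (hr : 0 < r) (hp : 1 < p) :
    ∃ C : ℝ, 0 < C ∧
      ∀ (ε R : ℝ) (z : EuclideanSpace ℝ (Fin m))
        (u : EuclideanSpace ℝ (Fin d) → EuclideanSpace ℝ (Fin m)),
        0 < ε → r * ε < R →
        AEStronglyMeasurable u volume →
        (∀ x, x ∉ ball (0 : EuclideanSpace ℝ (Fin d)) (R - r * ε) → u x = z) →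
        ∀ ξ : EuclideanSpace ℝ (Fin d),
          (∫⁻ x, (‖(ε⁻¹ : ℝ) • (u (x + ε • ξ) - u x)‖₊ : ℝ≥0∞) ^ p)
            ≤ ENNReal.ofReal (C * (‖ξ‖ ^ p + 1)) * Gen r p ε u := by
  obtain ⟨C, hC, hbound⟩ := exists_rpow_le_mul_setLIntegral_ball_of_subadditive
    (volume : Measure (EuclideanSpace ℝ (Fin d))) hp.le hr
  refine ⟨C, hC, fun ε R z u hε _ hu _ ξ ↦ ?_⟩
  set v := ε⁻¹ • u
  have hv : AEStronglyMeasurable v volume := hu.const_smul _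
  have hpow (η) : incrementLpNorm volume p v (ε • η) ^ p =
      ∫⁻ x, (‖(ε⁻¹ : ℝ) • (u (x + ε • η) - u x)‖₊ : ℝ≥0∞) ^ p := by
    simp only [incrementLpNorm_rpow (zero_lt_one.trans hp), v, Pi.smul_apply, smul_sub,
      enorm_eq_nnnorm]
  simp only [Gen, ← hpow]
  refine hbound (fun η ↦ incrementLpNorm volume p v (ε • η)) (fun a b ↦ ?_) ?_ ξ
  · rw [smul_add]
    exact incrementLpNorm_add_le hv hp.le _ _
  · exact (aemeasurable_incrementLpNorm hv).comp_quasiMeasurePreserving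
      (Measure.quasiMeasurePreserving_smul volume hε.ne')
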